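/- arXiv:2302.06800 — 7 statements merged into one kernel-verified Lean document; each statement's English description precedes it below -/
import Mathlib

section
/- If G is a perfectly divisible graph, then χ(G) ≤ binom(ω(G)+1, 2) = ω(G)(ω(G)+1)/2. -/
open SimpleGraph

/-- A graph is perfect if every induced subgraph has chromatic number
equal to its clique number. -/
def IsPerfect {V : Type*} (G : SimpleGraph V) : Prop :=
  ∀ S : Set V, (G.induce S).chromaticNumber = ((G.induce S).cliqueNum : ℕ∞)

/-- A graph `G` is perfectly divisible if the vertex set of every (nonempty) induced
subgraph `H` of `G` can be partitioned into sets `A` and `B` such that `H[A]` is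
perfect and `ω(H[B]) < ω(H)`. -/
def PerfectlyDivisible {V : Type*} (G : SimpleGraph V) : Prop :=
  ∀ S : Set V, S.Nonempty → ∃ A B : Set V, A ∪ B = S ∧ Disjoint A B ∧
    IsPerfect (G.induce A) ∧ (G.induce B).cliqueNum < (G.induce S).cliqueNum

/-- Clique number is monotone under graph embeddings. -/
lemma cliqueNum_le_of_embedding {α β : Type*} [Fintype α] [Fintype β]
    {G : SimpleGraph α} {H : SimpleGraph β} (f : G ↪g H) :
    G.cliqueNum ≤ H.cliqueNum := by
  obtain ⟨s, hs⟩ := G.exists_isNClique_cliqueNum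
  have hcl : H.IsNClique G.cliqueNum (s.map f.toEmbedding) := by
    constructor
    · rintro x hx y hy hxy
      simp only [Finset.coe_map, Set.mem_image, Finset.mem_coe] at hx hy
      obtain ⟨a, ha, rfl⟩ := hx
      obtain ⟨b, hb, rfl⟩ := hy
      have hab : a ≠ b := fun h => hxy (by rw [h])
      exact f.map_adj_iff.mpr (hs.1 ha hb hab)
    · rw [Finset.card_map]; exact hs.2
  calc G.cliqueNum = (s.map f.toEmbedding).card := hcl.2.symm
    _ ≤ H.cliqueNum := hcl.1.card_le_cliqueNum

/-- Combining colorings of a disjoint vertex partition. -/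
lemma colorable_union {V : Type*} (G : SimpleGraph V) {A B S : Set V}
    (hUn : A ∪ B = S) (hd : Disjoint A B) {a b : ℕ}
    (hA : (G.induce A).Colorable a) (hB : (G.induce B).Colorable b) :
    (G.induce S).Colorable (a + b) := by
  classical
  obtain ⟨CA⟩ := hA
  obtain ⟨CB⟩ := hB
  have memB : ∀ v : ↥S, (v : V) ∉ A → (v : V) ∈ B := by
    intro v hv
    have : (v : V) ∈ A ∪ B := hUn ▸ v.2
    rcases this with h | h
    · exact absurd h hv
    · exact h
  refine ⟨SimpleGraph.Coloring.mk
    (fun v => if h : (v : V) ∈ A then Fin.castAdd b (CA ⟨v, h⟩)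
      else Fin.natAdd a (CB ⟨v, memB v h⟩)) ?_⟩
  intro u v hadj
  have hGadj : G.Adj (u : V) (v : V) := hadj
  by_cases hu : (u : V) ∈ A <;> by_cases hv : (v : V) ∈ A <;>
    simp only [hu, hv, dif_pos, dif_neg, not_false_iff]
  · intro hEq
    have h1 := congrArg Fin.val hEq
    simp only [Fin.coe_castAdd] at h1
    exact CA.valid (show (G.induce A).Adj ⟨u.1, hu⟩ ⟨v.1, hv⟩ from hGadj) (Fin.ext h1)
  · intro hEq
    have h1 : ((Fin.castAdd b (CA ⟨u, hu⟩)) : ℕ) = ((Fin.natAdd a (CB ⟨v, memB v hv⟩)) : ℕ) := by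
      rw [hEq]
    simp only [Fin.coe_castAdd, Fin.coe_natAdd] at h1
    have := (CA ⟨u, hu⟩).2
    omega
  · intro hEq
    have h1 : ((Fin.natAdd a (CB ⟨u, memB u hu⟩)) : ℕ) = ((Fin.castAdd b (CA ⟨v, hv⟩)) : ℕ) := by
      rw [hEq]
    simp only [Fin.coe_castAdd, Fin.coe_natAdd] at h1
    have := (CA ⟨v, hv⟩).2
    omega
  · intro hEq
    have h1 := congrArg Fin.val hEq
    simp only [Fin.coe_natAdd] at h1
    have h2 : ((CB ⟨u, memB u hu⟩ : Fin b) : ℕ) = ((CB ⟨v, memB v hv⟩ : Fin b) : ℕ) := by omega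
    exact CB.valid (show (G.induce B).Adj ⟨u.1, memB u hu⟩ ⟨v.1, memB v hv⟩ from hGadj) (Fin.ext h2)

lemma perfectlyDivisible_key {V : Type*} [Fintype V]
    (G : SimpleGraph V) (hpd : PerfectlyDivisible G) :
    ∀ n : ℕ, ∀ S : Set V,
      (haveI := Fintype.ofFinite ↥S; (G.induce S).cliqueNum) ≤ n →
      (G.induce S).Colorable ((n + 1).choose 2) := by
  intro n
  induction n with
  | zero =>
    intro S hle
    haveI := Fintype.ofFinite ↥S
    by_cases hS : S.Nonempty
    · exfalso
      obtain ⟨x, hx⟩ := hS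
      have h1 : ({(⟨x, hx⟩ : ↥S)} : Finset ↥S).card ≤ (G.induce S).cliqueNum := by
        apply SimpleGraph.IsClique.card_le_cliqueNum
        simp [SimpleGraph.isClique_singleton]
      simp at h1
      omega
    · rw [Set.not_nonempty_iff_eq_empty] at hS
      subst hS
      haveI : IsEmpty ↥(∅ : Set V) := by simp [Set.isEmpty_coe_sort]
      exact SimpleGraph.Colorable.of_isEmpty _
  | succ n ih =>
    intro S hle
    haveI := Fintype.ofFinite ↥S
    by_cases hS : S.Nonempty
    · obtain ⟨A, B, hUn, hd, hperf, hlt⟩ := hpd S hS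
      haveI := Fintype.ofFinite ↥A
      haveI := Fintype.ofFinite ↥B
      have hAS : A ⊆ S := hUn ▸ Set.subset_union_left
      have hBS : B ⊆ S := hUn ▸ Set.subset_union_right
      -- clique number monotonicity
      have hωA : (G.induce A).cliqueNum ≤ (G.induce S).cliqueNum :=
        cliqueNum_le_of_embedding (G.induceHomOfLE hAS)
      have hωB : (G.induce B).cliqueNum ≤ n := by
        have := hlt
        omega
      -- B is colorable by induction
      have hBcol : (G.induce B).Colorable ((n + 1).choose 2) := ih B hωB
      -- A is colorable with n+1 colors, since it is perfect
      haveI := Fintype.ofFinite ↥(Set.univ : Set ↥A)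
      have hperfU := hperf Set.univ
      have hAcolk : ((G.induce A).induce Set.univ).Colorable
          (((G.induce A).induce Set.univ).cliqueNum) := by
        rw [← SimpleGraph.chromaticNumber_le_iff_colorable]
        exact hperfU.le
      have hAcol' : (G.induce A).Colorable (((G.induce A).induce Set.univ).cliqueNum) :=
        SimpleGraph.Colorable.of_hom ((G.induce A).induceUnivIso.symm.toEmbedding).toHom hAcolk
      have hkle : ((G.induce A).induce Set.univ).cliqueNum ≤ n + 1 := by
        have h1 : ((G.induce A).induce Set.univ).cliqueNum ≤ (G.induce A).cliqueNum :=
          cliqueNum_le_of_embedding ((G.induce A).induceUnivIso.toEmbedding)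
        omega
      have hAcol : (G.induce A).Colorable (n + 1) := hAcol'.mono hkle
      have := colorable_union G hUn hd hAcol hBcol
      have hch : (n + 1) + (n + 1).choose 2 = (n + 2).choose 2 := by
        rw [Nat.choose_succ_succ (n + 1) 1, Nat.choose_one_right]
      rwa [hch] at this
    · rw [Set.not_nonempty_iff_eq_empty] at hS
      subst hS
      haveI : IsEmpty ↥(∅ : Set V) := by simp [Set.isEmpty_coe_sort]
      exact SimpleGraph.Colorable.of_isEmpty _

/-- If `G` is perfectly divisible, then `χ(G) ≤ binom(ω(G)+1, 2)`. -/
theorem perfectlyDivisible_chromatic_bound {V : Type*} [Fintype V]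
    (G : SimpleGraph V) (hpd : PerfectlyDivisible G) :
    G.chromaticNumber ≤ ((G.cliqueNum + 1).choose 2 : ℕ∞) := by
  haveI := Fintype.ofFinite ↥(Set.univ : Set V)
  have h1 : (G.induce Set.univ).cliqueNum ≤ G.cliqueNum :=
    cliqueNum_le_of_embedding (G.induceUnivIso.toEmbedding)
  have h2 : (G.induce Set.univ).Colorable ((G.cliqueNum + 1).choose 2) :=
    perfectlyDivisible_key G hpd G.cliqueNum Set.univ h1
  have h3 : G.Colorable ((G.cliqueNum + 1).choose 2) :=
    SimpleGraph.Colorable.of_hom (G.induceUnivIso.symm.toEmbedding).toHom h2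
  exact h3.chromaticNumber_le
end

section
/- Let G be a fork-free graph and let C = v_1v_2...v_nv_1 be an odd hole of G (an induced cycle with n odd, n ≥ 5). Suppose u and v are adjacent vertices of G not on C such that u has at least one neighbor on C and v has no neighbor on C. Then either N(u) ∩ V(C) = {v_j, v_{j+1}} for some j ∈ {1, ..., n} (indices modulo n), or N(u) ∩ V(C) = V(C). -/
open SimpleGraph

/-- The fork: `K_{1,3}` with one edge subdivided once.
Vertices `a=0, b=1, c=2, d=3, e=4`; edges `ab, ac, ad, de`. -/
def fork : SimpleGraph (Fin 5) :=
  SimpleGraph.fromRel (fun x y =>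
    (x = 0 ∧ y = 1) ∨ (x = 0 ∧ y = 2) ∨ (x = 0 ∧ y = 3) ∨ (x = 3 ∧ y = 4))

/-- A graph `G` is `H`-free if it has no induced subgraph isomorphic to `H`,
equivalently there is no graph embedding of `H` into `G`. -/
def HFree {V W : Type*} (G : SimpleGraph V) (H : SimpleGraph W) : Prop :=
  IsEmpty (H ↪g G)

/-- From five vertices with the adjacency pattern of a fork, derive a contradiction
with fork-freeness. -/
lemma fork_of {V : Type*} (G : SimpleGraph V) (hfork : HFree G fork)
    (a b c d e : V)
    (hbc : b ≠ c) (hbd : b ≠ d) (hbe : b ≠ e) (hcd : c ≠ d) (hce : c ≠ e) (hae : a ≠ e)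
    (hab : G.Adj a b) (hac : G.Adj a c) (had : G.Adj a d) (hde : G.Adj d e)
    (nbc : ¬ G.Adj b c) (nbd : ¬ G.Adj b d) (nbe : ¬ G.Adj b e)
    (ncd : ¬ G.Adj c d) (nce : ¬ G.Adj c e) (nae : ¬ G.Adj a e) : False := by
  have hf : fork ↪g G := by
    refine ⟨⟨![a,b,c,d,e], ?_⟩, ?_⟩
    · have h1 := hab.ne
      have h2 := hac.ne
      have h3 := had.ne
      have h4 := hde.ne
      intro x y hxy
      fin_cases x <;> fin_cases y <;> simp_all
    · intro x y
      show G.Adj (![a,b,c,d,e] x) (![a,b,c,d,e] y) ↔ fork.Adj x y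
      have s1 := G.adj_comm a b
      have s2 := G.adj_comm a c
      have s3 := G.adj_comm a d
      have s4 := G.adj_comm d e
      fin_cases x <;> fin_cases y <;>
        simp [fork, SimpleGraph.fromRel_adj, hab, hac, had, hde, hab.symm, hac.symm, had.symm, hde.symm, nbc, nbd, nbe, ncd, nce, nae, mt G.adj_symm nbc, mt G.adj_symm nbd, mt G.adj_symm nbe, mt G.adj_symm ncd, mt G.adj_symm nce, mt G.adj_symm nae]
  exact hfork.false hf

open Fin.NatCast Fin.CommRing in
/-- Let `G` be fork-free and `C = c 0, c 1, ..., c (n-1), c 0` an odd hole of `G`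
(`n` odd, `n ≥ 5`). If `u` and `v` are adjacent vertices off `C` such that `u` has a
neighbor on `C` while `v` has none, then the neighbors of `u` on `C` are exactly two
consecutive vertices of `C`, or `u` is adjacent to all vertices of `C`. -/
theorem forkFree_oddHole_neighbor_structure {V : Type*} [Fintype V]
    (G : SimpleGraph V) (hfork : HFree G fork)
    {n : ℕ} [NeZero n] (hodd : Odd n) (hn : 5 ≤ n)
    (c : Fin n → V) (hinj : Function.Injective c)
    (hcyc : ∀ i j : Fin n, G.Adj (c i) (c j) ↔ (j = i + 1 ∨ i = j + 1))
    (u v : V) (hu : u ∉ Set.range c) (hv : v ∉ Set.range c)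
    (huv : G.Adj u v)
    (huC : ∃ i, G.Adj u (c i)) (hvC : ∀ i, ¬ G.Adj v (c i)) :
    (∃ j : Fin n, {x | x ∈ Set.range c ∧ G.Adj u x} = {c j, c (j + 1)}) ∨
      (∀ i, G.Adj u (c i)) := by
  classical
  -- basic Fin-arithmetic helper
  have key : ∀ (i : Fin n) (m : ℕ), 0 < m → m < 5 → i + (m : Fin n) ≠ i := by
    intro i m h1 h2 h
    have h0 : (m : Fin n) = 0 := by
      have := add_left_cancel (a := i) (b := (m : Fin n)) (c := 0) (by simpa using h)
      exact this
    have hdvd : n ∣ m := by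
      rwa [Fin.natCast_eq_zero] at h0
    have := Nat.le_of_dvd h1 hdvd
    omega
  have hue : ∀ i, u ≠ c i := fun i h => hu ⟨i, h.symm⟩
  have hve : ∀ i, v ≠ c i := fun i h => hv ⟨i, h.symm⟩
  -- Lemma 1: no isolated neighbor
  have L1 : ∀ i : Fin n, G.Adj u (c i) → G.Adj u (c (i+1)) ∨ G.Adj u (c (i-1)) := by
    intro i hi
    by_contra h
    push_neg at h
    obtain ⟨h1, h2⟩ := h
    refine fork_of G hfork (c i) (c (i+1)) (c (i-1)) u v ?_ ?_ ?_ ?_ ?_ ?_ ?_ ?_ ?_ ?_ ?_ ?_ ?_ ?_ ?_ ?_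
    · exact fun hh => key (i-1) 2 (by norm_num) (by norm_num)
        (by push_cast; linear_combination (hinj hh))
    · exact fun hh => (hue _ hh.symm)
    · exact fun hh => (hve _ hh.symm)
    · exact fun hh => (hue _ hh.symm)
    · exact fun hh => (hve _ hh.symm)
    · exact fun hh => (hve _ hh.symm)
    · exact (hcyc i (i+1)).2 (Or.inl rfl)
    · exact (hcyc i (i-1)).2 (Or.inr (by ring))
    · exact hi.symm
    · exact huv
    · rw [hcyc]
      rintro (hh | hh)
      · exact key (i-1) 3 (by norm_num) (by norm_num) (by push_cast; linear_combination -hh)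
      · exact key i 1 (by norm_num) (by norm_num) (by push_cast; linear_combination hh)
    · exact fun hh => h1 hh.symm
    · exact fun hh => hvC _ hh.symm
    · exact fun hh => h2 hh.symm
    · exact fun hh => hvC _ hh.symm
    · exact fun hh => hvC _ hh.symm
  -- Lemma 2: spreading of non-consecutive neighbors
  have L2 : ∀ i k : Fin n, G.Adj u (c i) → G.Adj u (c k) → i ≠ k → i ≠ k + 1 → k ≠ i + 1 →
      (G.Adj u (c (k+1)) ∨ i = k + 2) := by
    intro i k hi hk hik hik1 hki1
    by_contra h
    push_neg at h
    obtain ⟨h1, h2⟩ := h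
    refine fork_of G hfork u v (c i) (c k) (c (k+1)) ?_ ?_ ?_ ?_ ?_ ?_ ?_ ?_ ?_ ?_ ?_ ?_ ?_ ?_ ?_ ?_
    · exact hve i
    · exact hve k
    · exact hve (k+1)
    · exact fun hh => hik (hinj hh)
    · exact fun hh => hik1 (hinj hh)
    · exact hue (k+1)
    · exact huv
    · exact hi
    · exact hk
    · exact (hcyc k (k+1)).2 (Or.inl rfl)
    · exact hvC i
    · exact hvC k
    · exact hvC (k+1)
    · rw [hcyc]
      rintro (hh | hh)
      · exact hki1 hh
      · exact hik1 hh
    · rw [hcyc]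
      rintro (hh | hh)
      · exact hik (by linear_combination -hh)
      · exact h2 (by linear_combination hh)
    · exact h1
  obtain ⟨i0, hi0⟩ := huC
  by_cases hall : ∀ i, G.Adj u (c i)
  · exact Or.inr hall
  left
  -- find a boundary b: u adjacent to c b but not to c (b+1)
  have hbnd : ∃ b : Fin n, G.Adj u (c b) ∧ ¬ G.Adj u (c (b+1)) := by
    by_contra h
    push_neg at h
    apply hall
    have step : ∀ m : ℕ, G.Adj u (c (i0 + (m : Fin n))) := by
      intro m
      induction m with
      | zero => simpa using hi0
      | succ m ih =>
          have := h _ ih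
          have hc : ((m + 1 : ℕ) : Fin n) = (m : Fin n) + 1 := by push_cast; ring
          rwa [hc, ← add_assoc]
    intro j
    have := step (j - i0).val
    rw [Fin.cast_val_eq_self] at this
    have hj : i0 + (j - i0) = j := by ring
    rwa [hj] at this
  obtain ⟨b, hb, hb1⟩ := hbnd
  have hbm : G.Adj u (c (b-1)) := by
    rcases L1 b hb with h | h
    · exact absurd h hb1
    · exact h
  refine ⟨b - 1, ?_⟩
  have hb' : (b - 1) + 1 = b := by ring
  ext x
  simp only [Set.mem_setOf_eq, Set.mem_insert_iff, Set.mem_singleton_iff, hb']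
  constructor
  · rintro ⟨⟨i, rfl⟩, hadj⟩
    by_cases h1 : i = b - 1
    · exact Or.inl (congrArg c h1)
    by_cases h2 : i = b
    · exact Or.inr (congrArg c h2)
    exfalso
    by_cases h3 : i = b + 1
    · rw [h3] at hadj; exact hb1 hadj
    have h4 : b ≠ i + 1 := by
      intro hh
      exact h1 (by rw [hh]; ring)
    rcases L2 i b hadj hb h2 h3 h4 with hc | hc
    · exact hb1 hc
    · rw [hc] at hadj
      have hA3 : G.Adj u (c (b + 2 + 1)) := by
        rcases L1 (b+2) hadj with h | h
        · exact h
        · have hq : b + 2 - 1 = b + 1 := by ring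
          rw [hq] at h
          exact absurd h hb1
      have e1 : b + 2 + 1 ≠ b := fun hh => key b 3 (by norm_num) (by norm_num) (by push_cast; linear_combination hh)
      have e2 : b + 2 + 1 ≠ b + 1 := fun hh => key (b+1) 2 (by norm_num) (by norm_num) (by push_cast; linear_combination hh)
      have e3 : b ≠ b + 2 + 1 + 1 := fun hh => key b 4 (by norm_num) (by norm_num) (by push_cast; linear_combination -hh)
      rcases L2 (b+2+1) b hA3 hb e1 e2 e3 with hc2 | hc2
      · exact hb1 hc2
      · exact key (b+2) 1 (by norm_num) (by norm_num) (by push_cast; linear_combination hc2)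
  · rintro (rfl | rfl)
    · exact ⟨⟨b - 1, rfl⟩, hbm⟩
    · exact ⟨⟨b, rfl⟩, hb⟩
end

section
/- Let G be a (fork, gem)-free graph. If G contains an induced subgraph isomorphic to an odd balloon, then G has a bisimplicial vertex, i.e., a vertex whose open neighborhood is the union of two cliques. -/
open SimpleGraph

/-- The odd balloon with cycle length `n`: obtained from the cycle
`v_0 v_1 ... v_{n-1} v_0` (the vertices `Sum.inl i`) by adding a vertex
`u = Sum.inr 0` adjacent exactly to `v_0` and `v_1`, and a vertex
`s = Sum.inr 1` adjacent exactly to `u`. -/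
def oddBalloon (n : ℕ) : SimpleGraph (Fin n ⊕ Fin 2) :=
  SimpleGraph.fromRel (fun x y =>
    (∃ i j : Fin n, x = Sum.inl i ∧ y = Sum.inl j ∧ ((i : ℕ) + 1) % n = (j : ℕ)) ∨
    (∃ i : Fin n, x = Sum.inr 0 ∧ y = Sum.inl i ∧ ((i : ℕ) = 0 ∨ (i : ℕ) = 1)) ∨
    (x = Sum.inr 0 ∧ y = Sum.inr 1))

/-- The gem `K_1 + P_4`: vertex `0` is adjacent to all of the path `1-2-3-4`. -/
def gem : SimpleGraph (Fin 5) :=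
  SimpleGraph.fromRel (fun x y =>
    x = 0 ∨ (x = 1 ∧ y = 2) ∨ (x = 2 ∧ y = 3) ∨ (x = 3 ∧ y = 4))

lemma no_fork {V : Type*} {G : SimpleGraph V} (hfork : HFree G fork) {a b c d e : V}
    (hab : G.Adj a b) (hac : G.Adj a c) (had : G.Adj a d) (hde : G.Adj d e)
    (nbc : ¬ G.Adj b c) (nbd : ¬ G.Adj b d) (ncd : ¬ G.Adj c d)
    (nae : ¬ G.Adj a e) (nbe : ¬ G.Adj b e) (nce : ¬ G.Adj c e)
    (hbc : b ≠ c) (hbd : b ≠ d) (hcd : c ≠ d) (hae : a ≠ e) : False := by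
  have hab' : a ≠ b := G.ne_of_adj hab
  have hac' : a ≠ c := G.ne_of_adj hac
  have had' : a ≠ d := G.ne_of_adj had
  have hde' : d ≠ e := G.ne_of_adj hde
  have hbe : b ≠ e := fun h => nbd (by rw [h]; exact hde.symm)
  have hce : c ≠ e := fun h => ncd (by rw [h]; exact hde.symm)
  have h1 := hab'.symm; have h2 := hac'.symm; have h3 := had'.symm
  have h4 := hde'.symm; have h5 := hbc.symm; have h6 := hbd.symm
  have h7 := hcd.symm; have h8 := hae.symm; have h9 := hbe.symm; have h10 := hce.symm
  have nbc' : ¬ G.Adj c b := fun h => nbc h.symm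
  have nbd' : ¬ G.Adj d b := fun h => nbd h.symm
  have ncd' : ¬ G.Adj d c := fun h => ncd h.symm
  have nae' : ¬ G.Adj e a := fun h => nae h.symm
  have nbe' : ¬ G.Adj e b := fun h => nbe h.symm
  have nce' : ¬ G.Adj e c := fun h => nce h.symm
  have hinj : Function.Injective ![a,b,c,d,e] := by
    intro x y hxy
    fin_cases x <;> fin_cases y <;>
      simp_all [Matrix.cons_val_zero, Matrix.cons_val_one, Matrix.head_cons,
        Matrix.cons_val_succ]
  refine hfork.false ⟨⟨![a,b,c,d,e], hinj⟩, @fun x y => ?_⟩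
  fin_cases x <;> fin_cases y <;>
    simp_all [fork, SimpleGraph.fromRel_adj, Matrix.cons_val_zero, Matrix.cons_val_one,
      Matrix.head_cons, Matrix.cons_val_succ, hab.symm, hac.symm, had.symm, hde.symm,
      hab, hac, had, hde]

lemma no_gem {V : Type*} {G : SimpleGraph V} (hgem : HFree G gem) {z p1 p2 p3 p4 : V}
    (hz1 : G.Adj z p1) (hz2 : G.Adj z p2) (hz3 : G.Adj z p3) (hz4 : G.Adj z p4)
    (h12 : G.Adj p1 p2) (h23 : G.Adj p2 p3) (h34 : G.Adj p3 p4)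
    (n13 : ¬ G.Adj p1 p3) (n14 : ¬ G.Adj p1 p4) (n24 : ¬ G.Adj p2 p4)
    (e13 : p1 ≠ p3) (e14 : p1 ≠ p4) (e24 : p2 ≠ p4) : False := by
  have a1 : z ≠ p1 := G.ne_of_adj hz1
  have a2 : z ≠ p2 := G.ne_of_adj hz2
  have a3 : z ≠ p3 := G.ne_of_adj hz3
  have a4 : z ≠ p4 := G.ne_of_adj hz4
  have a5 : p1 ≠ p2 := G.ne_of_adj h12
  have a6 : p2 ≠ p3 := G.ne_of_adj h23
  have a7 : p3 ≠ p4 := G.ne_of_adj h34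
  have b1 := a1.symm; have b2 := a2.symm; have b3 := a3.symm; have b4 := a4.symm
  have b5 := a5.symm; have b6 := a6.symm; have b7 := a7.symm
  have b8 := e13.symm; have b9 := e14.symm; have b10 := e24.symm
  have n13' : ¬ G.Adj p3 p1 := fun h => n13 h.symm
  have n14' : ¬ G.Adj p4 p1 := fun h => n14 h.symm
  have n24' : ¬ G.Adj p4 p2 := fun h => n24 h.symm
  have hinj : Function.Injective ![z,p1,p2,p3,p4] := by
    intro x y hxy
    fin_cases x <;> fin_cases y <;>
      simp_all [Matrix.cons_val_zero, Matrix.cons_val_one, Matrix.head_cons,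
        Matrix.cons_val_succ]
  refine hgem.false ⟨⟨![z,p1,p2,p3,p4], hinj⟩, @fun x y => ?_⟩
  fin_cases x <;> fin_cases y <;>
    simp_all [gem, SimpleGraph.fromRel_adj, Matrix.cons_val_zero, Matrix.cons_val_one,
      Matrix.head_cons, Matrix.cons_val_succ, hz1, hz2, hz3, hz4, h12, h23, h34,
      hz1.symm, hz2.symm, hz3.symm, hz4.symm, h12.symm, h23.symm, h34.symm]

lemma no_claw_at_s {V : Type*} {G : SimpleGraph V} (hfork : HFree G fork) (hgem : HFree G gem)
    {n : ℕ} (hodd : Odd n) (hn5 : 5 ≤ n) [NeZero n]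
    (v : ZMod n → V) (u s : V)
    (hvinj : Function.Injective v)
    (hvv : ∀ z w : ZMod n, G.Adj (v z) (v w) ↔ (w = z + 1 ∨ z = w + 1))
    (huv : ∀ z : ZMod n, G.Adj u (v z) ↔ (z = 0 ∨ z = 1))
    (hsv : ∀ z : ZMod n, ¬ G.Adj s (v z))
    (hus : G.Adj u s)
    (hu_nv : ∀ z : ZMod n, u ≠ v z)
    (hs_nv : ∀ z : ZMod n, s ≠ v z) :
    ∀ a b c : V, G.Adj s a → G.Adj s b → G.Adj s c → a ≠ b → a ≠ c → b ≠ c →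
      ¬ G.Adj a b → ¬ G.Adj a c → ¬ G.Adj b c → False := by
  have hzk : ∀ k : ℕ, 0 < k → k < n → ((k : ℕ) : ZMod n) ≠ 0 := by
    intro k hk hkn h
    rw [ZMod.natCast_eq_zero_iff] at h
    exact absurd (Nat.le_of_dvd hk h) (by omega)
  have hz1 : (1 : ZMod n) ≠ 0 := by have := hzk 1 (by norm_num) (by omega); simpa using this
  have hz2 : (2 : ZMod n) ≠ 0 := by have := hzk 2 (by norm_num) (by omega); simpa using this
  have hz3 : (3 : ZMod n) ≠ 0 := by have := hzk 3 (by norm_num) (by omega); simpa using this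
  have hz4 : (4 : ZMod n) ≠ 0 := by have := hzk 4 (by norm_num) (by omega); simpa using this
  have hvne : ∀ z w : ZMod n, z ≠ w → v z ≠ v w := fun z w h hc => h (hvinj hc)
  have hnadj : ∀ z w : ZMod n, w ≠ z + 1 → z ≠ w + 1 → ¬ G.Adj (v z) (v w) := by
    intro z w h1 h2 h
    rcases (hvv z w).1 h with h' | h'
    exacts [h1 h', h2 h']
  have hadj1 : ∀ z : ZMod n, G.Adj (v z) (v (z+1)) := fun z => (hvv z (z+1)).2 (Or.inl rfl)
  -- no four consecutive neighbours on the cycle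
  have lemA : ∀ x : V, (∀ z, x ≠ v z) → ∀ i : ZMod n,
      G.Adj x (v i) → G.Adj x (v (i+1)) → G.Adj x (v (i+2)) → G.Adj x (v (i+3)) → False := by
    intro x hx i h0 h1 h2 h3
    have h12 := hadj1 i
    have h23 := hadj1 (i+1); rw [show i+1+1 = i+2 from by ring] at h23
    have h34 := hadj1 (i+2); rw [show i+2+1 = i+3 from by ring] at h34
    exact no_gem hgem h0 h1 h2 h3 h12 h23 h34
      (hnadj _ _ (fun h => hz1 (by linear_combination h)) (fun h => hz3 (by linear_combination -h)))
      (hnadj _ _ (fun h => hz2 (by linear_combination h)) (fun h => hz4 (by linear_combination -h)))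
      (hnadj _ _ (fun h => hz1 (by linear_combination h)) (fun h => hz3 (by linear_combination -h)))
      (hvne _ _ (fun h => hz2 (by linear_combination -h)))
      (hvne _ _ (fun h => hz3 (by linear_combination -h)))
      (hvne _ _ (fun h => hz2 (by linear_combination -h)))
  -- stepping lemma
  have lemB : ∀ x : V, (∀ z, x ≠ v z) → ∀ i : ZMod n,
      G.Adj x (v i) → ¬ G.Adj x (v (i+1)) → ¬ G.Adj x (v (i-1)) → G.Adj x (v (i+2)) := by
    intro x hx i hi hi1 hi1'
    by_contra hi2
    exact no_fork hfork (a := v i) (b := v (i-1)) (c := x) (d := v (i+1)) (e := v (i+2))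
      ((hvv _ _).2 (Or.inr (by ring))) hi.symm (hadj1 i)
      (by have := hadj1 (i+1); rwa [show i+1+1 = i+2 from by ring] at this)
      (fun h => hi1' h.symm)
      (hnadj _ _ (fun h => hz1 (by linear_combination h)) (fun h => hz3 (by linear_combination -h)))
      hi1
      (hnadj _ _ (fun h => hz1 (by linear_combination h)) (fun h => hz3 (by linear_combination -h)))
      (hnadj _ _ (fun h => hz2 (by linear_combination h)) (fun h => hz4 (by linear_combination -h)))
      hi2
      (fun h => hx _ h.symm) (hvne _ _ (fun h => hz2 (by linear_combination -h)))
      (hx _) (hvne _ _ (fun h => hz2 (by linear_combination -h)))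
  -- parity: a vertex with a cycle neighbour has two consecutive ones
  have lemC : ∀ x : V, (∀ z, x ≠ v z) → ∀ i₀ : ZMod n, G.Adj x (v i₀) →
      ∃ p : ZMod n, G.Adj x (v p) ∧ G.Adj x (v (p+1)) := by
    intro x hx i₀ hi₀
    by_contra hno
    push_neg at hno
    have step : ∀ k : ℕ, G.Adj x (v (i₀ + (2*k : ℕ))) := by
      intro k
      induction k with
      | zero => simpa using hi₀
      | succ k ih =>
        have h1 : ¬ G.Adj x (v (i₀ + (2*k : ℕ) + 1)) := hno _ ih
        have h2 : ¬ G.Adj x (v (i₀ + (2*k : ℕ) - 1)) := by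
          intro h
          have := hno _ h
          rw [show i₀ + ((2*k:ℕ):ZMod n) - 1 + 1 = i₀ + ((2*k:ℕ):ZMod n) from by ring] at this
          exact this ih
        have h3 := lemB x hx _ ih h1 h2
        rw [show i₀ + ((2*k:ℕ):ZMod n) + 2 = i₀ + ((2*(k+1):ℕ):ZMod n) from by push_cast; ring] at h3
        exact h3
    have hu2 : IsUnit (2 : ZMod n) := by
      have := (ZMod.isUnit_iff_coprime 2 n).2 (Nat.coprime_two_left.2 hodd)
      simpa using this
    have hall : ∀ j : ZMod n, G.Adj x (v j) := by
      intro j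
      have key : i₀ + ((2 * ((j - i₀) * (2:ZMod n)⁻¹).val : ℕ) : ZMod n) = j := by
        push_cast
        rw [ZMod.natCast_rightInverse _]
        rw [show (2:ZMod n) * ((j - i₀) * 2⁻¹) = (2 * 2⁻¹) * (j - i₀) from by ring,
          ZMod.mul_inv_of_unit _ hu2, one_mul]
        ring
      have := step (((j - i₀) * (2:ZMod n)⁻¹).val)
      rwa [key] at this
    exact hno i₀ hi₀ (hall (i₀ + 1))
  -- no three consecutive, for neighbours of s
  have lemD2 : ∀ x : V, G.Adj s x → ∀ q : ZMod n,
      G.Adj x (v q) → G.Adj x (v (q+1)) → G.Adj x (v (q+2)) → False := by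
    intro x hsx q h1 h2 h3
    have hx : ∀ z, x ≠ v z := fun z h => hsv z (h ▸ hsx)
    have h4 : ¬ G.Adj x (v (q+3)) := fun h => lemA x hx q h1 h2 h3 h
    exact no_fork hfork (a := x) (b := s) (c := v q) (d := v (q+2)) (e := v (q+3))
      hsx.symm h1 h3 ((hvv _ _).2 (Or.inl (by ring)))
      (hsv q) (hsv _)
      (hnadj _ _ (fun h => hz1 (by linear_combination h)) (fun h => hz3 (by linear_combination -h)))
      h4 (hsv _)
      (hnadj _ _ (fun h => hz2 (by linear_combination h)) (fun h => hz4 (by linear_combination -h)))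
      (hs_nv q) (hs_nv _) (hvne _ _ (fun h => hz2 (by linear_combination -h))) (hx _)
  -- unique left endpoint, for neighbours of s
  have lemD1 : ∀ x : V, G.Adj s x → ∀ i j : ZMod n,
      G.Adj x (v i) → ¬ G.Adj x (v (i-1)) → G.Adj x (v j) → ¬ G.Adj x (v (j-1)) → i = j := by
    intro x hsx i j hi hi' hj hj'
    have hx : ∀ z, x ≠ v z := fun z h => hsv z (h ▸ hsx)
    by_contra hne
    have hji : j ≠ i + 1 := by
      intro h; apply hj'; rw [h, show i + 1 - 1 = i from by ring]; exact hi
    have hij : i ≠ j + 1 := by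
      intro h; apply hi'; rw [h, show j + 1 - 1 = j from by ring]; exact hj
    by_cases hcase : j = i + 2
    · exact no_fork hfork (a := x) (b := s) (c := v j) (d := v i) (e := v (i-1))
        hsx.symm hj hi ((hvv _ _).2 (Or.inr (by ring)))
        (hsv _) (hsv _) (hnadj _ _ hij hji) hi' (hsv _)
        (hnadj _ _ (fun h => hz4 (by rw [hcase] at h; linear_combination -h))
          (fun h => hne (by linear_combination -h)))
        (hs_nv _) (hs_nv _) (hvne _ _ (fun h => hne h.symm)) (hx _)
    · exact no_fork hfork (a := x) (b := s) (c := v i) (d := v j) (e := v (j-1))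
        hsx.symm hi hj ((hvv _ _).2 (Or.inr (by ring)))
        (hsv _) (hsv _) (hnadj _ _ hji hij) hj' (hsv _)
        (hnadj _ _ (fun h => hcase (by linear_combination h)) (fun h => hne (by linear_combination h)))
        (hs_nv _) (hs_nv _) (hvne _ _ hne) (hx _)
  -- trace classification for neighbours of s
  have lemD : ∀ x : V, G.Adj s x → ∀ i₀ : ZMod n, G.Adj x (v i₀) →
      ∃ p : ZMod n, G.Adj x (v p) ∧ G.Adj x (v (p+1)) ∧
        ∀ j : ZMod n, G.Adj x (v j) → j = p ∨ j = p + 1 := by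
    intro x hsx i₀ hi₀
    have hx : ∀ z, x ≠ v z := fun z h => hsv z (h ▸ hsx)
    obtain ⟨p, hp, hp1⟩ := lemC x hx i₀ hi₀
    have hpm : ¬ G.Adj x (v (p-1)) := by
      intro h
      exact lemD2 x hsx (p-1) h (by rw [show p - 1 + 1 = p from by ring]; exact hp)
        (by rw [show p - 1 + 2 = p + 1 from by ring]; exact hp1)
    refine ⟨p, hp, hp1, fun j hj => ?_⟩
    by_cases hjm : G.Adj x (v (j-1))
    · right
      have hjmm : ¬ G.Adj x (v (j-2)) := by
        intro h
        exact lemD2 x hsx (j-2) h (by rw [show j-2+1 = j-1 from by ring]; exact hjm)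
          (by rw [show j-2+2 = j from by ring]; exact hj)
      have hx1 := lemD1 x hsx (j-1) p hjm
        (by rw [show j-1-1 = j-2 from by ring]; exact hjmm) hp hpm
      linear_combination hx1
    · left
      exact lemD1 x hsx j p hj hjm hp hpm
  -- coverage lemma
  have cov : ∀ a b c : V, G.Adj s a → G.Adj s b → G.Adj s c →
      b ≠ c → b ≠ a → c ≠ a → ¬ G.Adj b c → ¬ G.Adj b a → ¬ G.Adj c a →
      ∀ i : ZMod n, G.Adj a (v i) → G.Adj b (v i) ∨ G.Adj c (v i) := by
    intro a b c hsa hsb hsc hbc hba hca nbc nba nca i hai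
    by_contra hcon
    push_neg at hcon
    exact no_fork hfork (a := s) (b := b) (c := c) (d := a) (e := v i)
      hsb hsc hsa hai nbc nba nca (hsv i) hcon.1 hcon.2 hbc hba hca (hs_nv i)
  -- two nonadjacent vertices cannot have the same 2-interval trace
  have lemFc : ∀ a b : V, a ≠ b → ¬ G.Adj a b → (∀ z, a ≠ v z) → (∀ z, b ≠ v z) →
      ∀ p : ZMod n, G.Adj a (v p) → G.Adj b (v p) →
      (∀ j, G.Adj a (v j) → j = p ∨ j = p+1) → (∀ j, G.Adj b (v j) → j = p ∨ j = p+1) →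
      False := by
    intro a b hab nab ha hb p hap hbp hca hcb
    have napm : ¬ G.Adj a (v (p-1)) := by
      intro h; rcases hca _ h with h' | h'
      exacts [hz1 (by linear_combination -h'), hz2 (by linear_combination -h')]
    have nbpm : ¬ G.Adj b (v (p-1)) := by
      intro h; rcases hcb _ h with h' | h'
      exacts [hz1 (by linear_combination -h'), hz2 (by linear_combination -h')]
    have napmm : ¬ G.Adj a (v (p-2)) := by
      intro h; rcases hca _ h with h' | h'
      exacts [hz2 (by linear_combination -h'), hz3 (by linear_combination -h')]
    have nbpmm : ¬ G.Adj b (v (p-2)) := by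
      intro h; rcases hcb _ h with h' | h'
      exacts [hz2 (by linear_combination -h'), hz3 (by linear_combination -h')]
    exact no_fork hfork (a := v p) (b := a) (c := b) (d := v (p-1)) (e := v (p-2))
      hap.symm hbp.symm ((hvv _ _).2 (Or.inr (by ring))) ((hvv _ _).2 (Or.inr (by ring)))
      nab napm nbpm
      (hnadj _ _ (fun h => hz3 (by linear_combination -h)) (fun h => hz1 (by linear_combination h)))
      napmm nbpmm
      hab (ha _) (hb _) (hvne _ _ (fun h => hz2 (by linear_combination h)))
  -- main claim: claw leaves at s have empty traces
  have claim1 : ∀ a b c : V, G.Adj s a → G.Adj s b → G.Adj s c →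
      a ≠ b → a ≠ c → b ≠ c → ¬ G.Adj a b → ¬ G.Adj a c → ¬ G.Adj b c →
      ∀ i : ZMod n, ¬ G.Adj a (v i) := by
    intro a b c hsa hsb hsc hab hac hbc nab nac nbc i hi
    have ha : ∀ z, a ≠ v z := fun z h => hsv z (h ▸ hsa)
    have hb : ∀ z, b ≠ v z := fun z h => hsv z (h ▸ hsb)
    have hc : ∀ z, c ≠ v z := fun z h => hsv z (h ▸ hsc)
    obtain ⟨p, hp, hp1, hcla⟩ := lemD a hsa i hi
    have hnapm : ¬ G.Adj a (v (p-1)) := by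
      intro h; rcases hcla _ h with h' | h'
      exacts [hz1 (by linear_combination -h'), hz2 (by linear_combination -h')]
    have covp := cov a b c hsa hsb hsc hbc hab.symm hac.symm nbc
      (fun h => nab h.symm) (fun h => nac h.symm) p hp
    have covp1 := cov a b c hsa hsb hsc hbc hab.symm hac.symm nbc
      (fun h => nab h.symm) (fun h => nac h.symm) (p+1) hp1
    have both : ∀ t : V, G.Adj s t → a ≠ t → ¬ G.Adj a t →
        G.Adj t (v p) → G.Adj t (v (p+1)) → False := by
      intro t hst hat nat htp htp1
      have ht : ∀ z, t ≠ v z := fun z h => hsv z (h ▸ hst)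
      obtain ⟨q, hq, hq1, hct⟩ := lemD t hst p htp
      have hqp : q = p := by
        rcases hct p htp with h1 | h1
        · exact h1.symm
        · rcases hct (p+1) htp1 with h2 | h2
          · exact absurd (show (2:ZMod n) = 0 from by linear_combination h2 - h1) hz2
          · exact absurd (show (1:ZMod n) = 0 from by linear_combination h2 - h1) hz1
      rw [hqp] at hct
      exact lemFc a t hat nat ha ht p hp htp hcla hct
    rcases covp with hbp | hcp
    · rcases covp1 with hbp1 | hcp1
      · exact both b hsb hab nab hbp hbp1
      · obtain ⟨q, hq, hq1, hclb⟩ := lemD b hsb p hbp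
        rcases hclb p hbp with h1 | h1
        · exact both b hsb hab nab hbp (by rw [← h1] at hq1; exact hq1)
        · have hbpm : G.Adj b (v (p-1)) := by
            rw [show p - 1 = q from by linear_combination h1]; exact hq
          rcases cov b a c hsb hsa hsc hac hab hbc.symm nac nab
            (fun h => nbc h.symm) (p-1) hbpm with h2 | h2
          · exact hnapm h2
          · obtain ⟨r, hr, hr1, hclc⟩ := lemD c hsc (p+1) hcp1
            rcases hclc (p-1) h2 with h3 | h3 <;> rcases hclc (p+1) hcp1 with h4 | h4
            · exact absurd (show (2:ZMod n) = 0 from by linear_combination h4 - h3) hz2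
            · exact absurd (show (1:ZMod n) = 0 from by linear_combination h4 - h3) hz1
            · exact absurd (show (3:ZMod n) = 0 from by linear_combination h4 - h3) hz3
            · exact absurd (show (2:ZMod n) = 0 from by linear_combination h4 - h3) hz2
    · rcases covp1 with hbp1 | hcp1
      · obtain ⟨q, hq, hq1, hclc'⟩ := lemD c hsc p hcp
        rcases hclc' p hcp with h1 | h1
        · exact both c hsc hac nac hcp (by rw [← h1] at hq1; exact hq1)
        · have hcpm : G.Adj c (v (p-1)) := by
            rw [show p - 1 = q from by linear_combination h1]; exact hq
          rcases cov c a b hsc hsa hsb hab hac hbc nab nac nbc (p-1) hcpm with h2 | h2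
          · exact hnapm h2
          · obtain ⟨r, hr, hr1, hclb'⟩ := lemD b hsb (p+1) hbp1
            rcases hclb' (p-1) h2 with h3 | h3 <;> rcases hclb' (p+1) hbp1 with h4 | h4
            · exact absurd (show (2:ZMod n) = 0 from by linear_combination h4 - h3) hz2
            · exact absurd (show (1:ZMod n) = 0 from by linear_combination h4 - h3) hz1
            · exact absurd (show (3:ZMod n) = 0 from by linear_combination h4 - h3) hz3
            · exact absurd (show (2:ZMod n) = 0 from by linear_combination h4 - h3) hz2
      · exact both c hsc hac nac hcp hcp1
  -- final assembly
  intro a b c hsa hsb hsc hab hac hbc nab nac nbc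
  have ha : ∀ z, a ≠ v z := fun z h => hsv z (h ▸ hsa)
  have hb : ∀ z, b ≠ v z := fun z h => hsv z (h ▸ hsb)
  have hc : ∀ z, c ≠ v z := fun z h => hsv z (h ▸ hsc)
  have emptyA := claim1 a b c hsa hsb hsc hab hac hbc nab nac nbc
  have emptyB := claim1 b a c hsb hsa hsc hab.symm hbc hac
    (fun h => nab h.symm) nbc nac
  have emptyC := claim1 c a b hsc hsa hsb hac.symm hbc.symm hab
    (fun h => nac h.symm) (fun h => nbc h.symm) nab
  have hu0 : G.Adj u (v 0) := (huv 0).2 (Or.inl rfl)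
  have hua : u ≠ a := fun h => emptyA 0 (h ▸ hu0)
  have hub : u ≠ b := fun h => emptyB 0 (h ▸ hu0)
  have huc : u ≠ c := fun h => emptyC 0 (h ▸ hu0)
  have hD : ∀ x y : V, G.Adj s x → G.Adj s y → u ≠ x → u ≠ y → x ≠ y →
      ¬ G.Adj x y → ¬ G.Adj u x → ¬ G.Adj u y → False := by
    intro x y hsx hsy hux huy hxy nxy nux nuy
    exact claim1 u x y hus.symm hsx hsy hux huy hxy nux nuy nxy 0 hu0
  have final : ∀ x y : V, G.Adj u x → G.Adj u y → x ≠ y → ¬ G.Adj x y →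
      (∀ i, ¬ G.Adj x (v i)) → (∀ i, ¬ G.Adj y (v i)) →
      (∀ z, x ≠ v z) → (∀ z, y ≠ v z) → False := by
    intro x y hux huy hxy nxy ex ey hxv hyv
    refine no_fork hfork (a := u) (b := x) (c := y) (d := v 0) (e := v (0-1))
      hux huy hu0 ((hvv _ _).2 (Or.inr (by ring)))
      nxy (ex 0) (ey 0) ?_ (ex _) (ey _)
      hxy (hxv 0) (hyv 0) (hu_nv _)
    intro h
    rcases (huv _).1 h with h' | h'
    · exact hz1 (by linear_combination -h')
    · exact hz2 (by linear_combination -h')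
  by_cases h1 : G.Adj u a
  · by_cases h2 : G.Adj u b
    · exact final a b h1 h2 hab nab emptyA emptyB ha hb
    · have h3 : G.Adj u c := by
        by_contra h3
        exact hD b c hsb hsc hub huc hbc nbc h2 h3
      exact final a c h1 h3 hac nac emptyA emptyC ha hc
  · have h2 : G.Adj u b := by
      by_contra h2
      exact hD a b hsa hsb hua hub hab nab h1 h2
    have h3 : G.Adj u c := by
      by_contra h3
      exact hD a c hsa hsc hua huc hac nac h1 h3
    exact final b c h2 h3 hbc nbc emptyB emptyC hb hc

/-- If a (fork, gem)-free graph `G` contains an induced odd balloon, then `G` has a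
bisimplicial vertex: a vertex whose open neighborhood is the union of two cliques. -/
theorem fork_gem_free_oddBalloon_bisimplicial {V : Type*} [Fintype V]
    (G : SimpleGraph V) (hfork : HFree G fork) (hgem : HFree G gem)
    (hballoon : ∃ n : ℕ, Odd n ∧ 5 ≤ n ∧ Nonempty (oddBalloon n ↪g G)) :
    ∃ u : V, ∃ K₁ K₂ : Set V, G.IsClique K₁ ∧ G.IsClique K₂ ∧
      G.neighborSet u = K₁ ∪ K₂ := by
  classical
  obtain ⟨n, hodd, hn5, ⟨f⟩⟩ := hballoon
  haveI : NeZero n := ⟨by omega⟩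
  haveI : Fact (1 < n) := ⟨by omega⟩
  set vv : ZMod n → V := fun z => f (Sum.inl ⟨z.val, ZMod.val_lt z⟩) with hvv_def
  set uu : V := f (Sum.inr 0) with huu_def
  set ss : V := f (Sum.inr 1) with hss_def
  have hval_add1 : ∀ z : ZMod n, (z + 1).val = (z.val + 1) % n := by
    intro z; rw [ZMod.val_add, ZMod.val_one]
  have hmod : ∀ z w : ZMod n, ((z.val + 1) % n = w.val) ↔ w = z + 1 := by
    intro z w
    constructor
    · intro h; apply ZMod.val_injective; rw [hval_add1]; exact h.symm
    · intro h; rw [h, hval_add1]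
  have hz1' : (1 : ZMod n) ≠ 0 := one_ne_zero
  have hvinj : Function.Injective vv := by
    intro z w h
    have := f.injective h
    simp only [Sum.inl.injEq, Fin.mk.injEq] at this
    exact ZMod.val_injective n this
  have hvvadj : ∀ z w : ZMod n, G.Adj (vv z) (vv w) ↔ (w = z + 1 ∨ z = w + 1) := by
    intro z w
    rw [hvv_def]
    simp only [Embedding.map_adj_iff]; simp only [oddBalloon, SimpleGraph.fromRel_adj]
    constructor
    · rintro ⟨hne, h | h⟩
      · rcases h with ⟨i, j, h1, h2, h3⟩ | ⟨i, h1, h2, h3⟩ | ⟨h1, h2⟩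
        · rw [Sum.inl.injEq] at h1 h2
          left
          apply (hmod z w).1
          rw [show (z.val : ℕ) = ((⟨z.val, ZMod.val_lt z⟩ : Fin n) : ℕ) from rfl,
            show (w.val : ℕ) = ((⟨w.val, ZMod.val_lt w⟩ : Fin n) : ℕ) from rfl, h1, h2]
          exact h3
        · exact absurd h1 (by simp)
        · exact absurd h1 (by simp)
      · rcases h with ⟨i, j, h1, h2, h3⟩ | ⟨i, h1, h2, h3⟩ | ⟨h1, h2⟩
        · rw [Sum.inl.injEq] at h1 h2
          right
          apply (hmod w z).1
          rw [show (w.val : ℕ) = ((⟨w.val, ZMod.val_lt w⟩ : Fin n) : ℕ) from rfl,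
            show (z.val : ℕ) = ((⟨z.val, ZMod.val_lt z⟩ : Fin n) : ℕ) from rfl, h1, h2]
          exact h3
        · exact absurd h1 (by simp)
        · exact absurd h1 (by simp)
    · intro h
      have hzw : z ≠ w := by
        rintro rfl
        rcases h with h | h <;> exact hz1' (by linear_combination -h)
      refine ⟨by simpa [Fin.mk.injEq] using fun hh => hzw (ZMod.val_injective n hh), ?_⟩
      rcases h with h | h
      · exact Or.inl (Or.inl ⟨_, _, rfl, rfl, (hmod z w).2 h⟩)
      · exact Or.inr (Or.inl ⟨_, _, rfl, rfl, (hmod w z).2 h⟩)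
  have hval01 : ∀ z : ZMod n, (z.val = 0 ∨ z.val = 1) ↔ (z = 0 ∨ z = 1) := by
    intro z
    constructor
    · rintro (h | h)
      · exact Or.inl ((ZMod.val_eq_zero z).1 h)
      · right; apply ZMod.val_injective; rw [ZMod.val_one]; exact h
    · rintro (rfl | rfl)
      · left; exact ZMod.val_zero
      · right; exact ZMod.val_one n
  have huvadj : ∀ z : ZMod n, G.Adj uu (vv z) ↔ (z = 0 ∨ z = 1) := by
    intro z
    rw [huu_def, hvv_def]
    simp only [Embedding.map_adj_iff]; simp only [oddBalloon, SimpleGraph.fromRel_adj]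
    constructor
    · rintro ⟨hne, h | h⟩
      · rcases h with ⟨i, j, h1, h2, h3⟩ | ⟨i, h1, h2, h3⟩ | ⟨h1, h2⟩
        · exact absurd h1 (by simp)
        · rw [Sum.inl.injEq] at h2
          apply (hval01 z).1
          rw [show (z.val : ℕ) = ((⟨z.val, ZMod.val_lt z⟩ : Fin n) : ℕ) from rfl, h2]
          exact h3
        · exact absurd h2 (by simp)
      · rcases h with ⟨i, j, h1, h2, h3⟩ | ⟨i, h1, h2, h3⟩ | ⟨h1, h2⟩
        · exact absurd h2 (by simp)
        · exact absurd h1 (by simp)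
        · exact absurd h1 (by simp)
    · intro h
      refine ⟨by simp, Or.inl (Or.inr (Or.inl ⟨⟨z.val, ZMod.val_lt z⟩, ?_, ?_, ?_⟩))⟩
      · first | rfl | trivial
      · first | rfl | trivial
      · exact (hval01 z).2 h
  have hsvadj : ∀ z : ZMod n, ¬ G.Adj ss (vv z) := by
    intro z
    rw [hss_def, hvv_def]
    simp only [Embedding.map_adj_iff]; simp only [oddBalloon, SimpleGraph.fromRel_adj]
    rintro ⟨hne, h | h⟩
    · rcases h with ⟨i, j, h1, h2, h3⟩ | ⟨i, h1, h2, h3⟩ | ⟨h1, h2⟩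
      · exact absurd h1 (by simp)
      · simp only [Sum.inr.injEq] at h1
        exact absurd h1 (by decide)
      · simp only [Sum.inr.injEq] at h1
        exact absurd h1 (by decide)
    · rcases h with ⟨i, j, h1, h2, h3⟩ | ⟨i, h1, h2, h3⟩ | ⟨h1, h2⟩
      · exact absurd h2 (by simp)
      · exact absurd h1 (by simp)
      · exact absurd h1 (by simp)
  have husadj : G.Adj uu ss := by
    rw [huu_def, hss_def]
    simp only [Embedding.map_adj_iff]; simp only [oddBalloon, SimpleGraph.fromRel_adj]
    refine ⟨by simp, Or.inl (Or.inr (Or.inr ?_))⟩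
    first | exact ⟨rfl, rfl⟩ | trivial | constructor <;> first | rfl | trivial
  have hu_nv : ∀ z : ZMod n, uu ≠ vv z := by
    intro z h
    exact absurd (f.injective h) (by simp)
  have hs_nv : ∀ z : ZMod n, ss ≠ vv z := by
    intro z h
    exact absurd (f.injective h) (by simp)
  -- s is not the centre of a claw
  have noclaw := no_claw_at_s hfork hgem hodd hn5 vv uu ss hvinj hvvadj huvadj hsvadj
    husadj hu_nv hs_nv
  -- build the two cliques
  refine ⟨ss, ?_⟩
  haveI : Finite (Set V) := inferInstance
  set F : Set (Set V) := {A | A ⊆ G.neighborSet ss ∧ G.IsClique A} with hF_def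
  have hFne : F.Nonempty := ⟨∅, by simp [hF_def]⟩
  obtain ⟨K, hKF, hKmax⟩ := Set.Finite.exists_maximalFor id F (Set.toFinite F) hFne
  refine ⟨K, G.neighborSet ss \ K, hKF.2, ?_, (Set.union_diff_cancel hKF.1).symm⟩
  rw [SimpleGraph.isClique_iff]
  intro x hx y hy hxy
  by_contra hnxy
  obtain ⟨hxN, hxK⟩ := hx
  obtain ⟨hyN, hyK⟩ := hy
  have hwit : ∀ w, w ∈ G.neighborSet ss → w ∉ K → ∃ i ∈ K, i ≠ w ∧ ¬ G.Adj w i := by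
    intro w hwN hwK
    by_contra hcon
    push_neg at hcon
    have hmem : insert w K ∈ F := by
      refine ⟨Set.insert_subset hwN hKF.1, hKF.2.insert fun b hb hbw => ?_⟩
      exact hcon b hb (fun h => hbw h.symm)
    have heq := hKmax hmem (Set.subset_insert w K)
    exact hwK (heq (Set.mem_insert w K))
  obtain ⟨i, hiK, hix, hnxi⟩ := hwit x hxN hxK
  obtain ⟨j, hjK, hjy, hnyj⟩ := hwit y hyN hyK
  have hsx : G.Adj ss x := hxN
  have hsy : G.Adj ss y := hyN
  have hsi : G.Adj ss i := hKF.1 hiK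
  have hsj : G.Adj ss j := hKF.1 hjK
  have hyi_ne : y ≠ i := fun h => hyK (h ▸ hiK)
  have hxj_ne : x ≠ j := fun h => hxK (h ▸ hjK)
  have hxi_ne : x ≠ i := fun h => hxK (h ▸ hiK)
  by_cases hij : i = j
  · subst hij
    exact noclaw x y i hsx hsy hsi hxy hxi_ne hyi_ne hnxy hnxi hnyj
  · have haij : G.Adj i j := hKF.2 hiK hjK hij
    by_cases hyi : G.Adj y i
    · by_cases hxj : G.Adj x j
      · exact no_gem hgem hsy hsi hsj hsx hyi haij hxj.symm hnyj
          (fun h => hnxy h.symm) (fun h => hnxi h.symm) hjy.symm hxy.symm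
          (fun h => hxi_ne h.symm)
      · exact noclaw y x j hsy hsx hsj hxy.symm hjy.symm hxj_ne
          (fun h => hnxy h.symm) hnyj hxj
    · exact noclaw x y i hsx hsy hsi hxy hxi_ne hyi_ne hnxy hnxi hyi
end

section
/- Let G be a fork-free graph and let X_0 = {v_1, ..., v_n} be a set of n vertices with n odd and n ≥ 7 such that v_i is adjacent to v_j if and only if |i − j| ∉ {1, n−1} (indices taken modulo n), i.e., X_0 induces an odd antihole of order at least 7. Let A be the set of vertices of G outside X_0 with no neighbor in X_0. Then every vertex b of G that has a neighbor in A and a neighbor in X_0 is complete to X_0, i.e., adjacent to all vertices of X_0. -/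
open SimpleGraph
open Fin.NatCast Fin.CommRing

instance : DecidableRel fork.Adj := fun a b =>
  decidable_of_iff _ (SimpleGraph.fromRel_adj _ a b).symm

lemma mk_fork {V : Type*} {G : SimpleGraph V} (hfork : IsEmpty (fork ↪g G))
    {w0 w1 w2 w3 w4 : V}
    (d01 : w0 ≠ w1) (d02 : w0 ≠ w2) (d03 : w0 ≠ w3) (d04 : w0 ≠ w4)
    (d12 : w1 ≠ w2) (d13 : w1 ≠ w3) (d14 : w1 ≠ w4)
    (d23 : w2 ≠ w3) (d24 : w2 ≠ w4) (d34 : w3 ≠ w4)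
    (a01 : G.Adj w0 w1) (a02 : G.Adj w0 w2) (a03 : G.Adj w0 w3) (a34 : G.Adj w3 w4)
    (n04 : ¬ G.Adj w0 w4) (n12 : ¬ G.Adj w1 w2) (n13 : ¬ G.Adj w1 w3)
    (n14 : ¬ G.Adj w1 w4) (n23 : ¬ G.Adj w2 w3) (n24 : ¬ G.Adj w2 w4) :
    False := by
  apply hfork.false
  refine ⟨⟨![w0,w1,w2,w3,w4], ?_⟩, ?_⟩
  · intro x y h
    fin_cases x <;> fin_cases y <;> simp_all
  · intro x y
    fin_cases x <;> fin_cases y <;>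
      first
        | exact iff_of_true a01 (by decide)
        | exact iff_of_true a02 (by decide)
        | exact iff_of_true a03 (by decide)
        | exact iff_of_true a34 (by decide)
        | exact iff_of_true (G.adj_symm a01) (by decide)
        | exact iff_of_true (G.adj_symm a02) (by decide)
        | exact iff_of_true (G.adj_symm a03) (by decide)
        | exact iff_of_true (G.adj_symm a34) (by decide)
        | exact iff_of_false (G.loopless.irrefl _) (by decide)
        | exact iff_of_false n04 (by decide)
        | exact iff_of_false n12 (by decide)
        | exact iff_of_false n13 (by decide)
        | exact iff_of_false n14 (by decide)
        | exact iff_of_false n23 (by decide)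
        | exact iff_of_false n24 (by decide)
        | exact iff_of_false (fun h => n04 (G.adj_symm h)) (by decide)
        | exact iff_of_false (fun h => n12 (G.adj_symm h)) (by decide)
        | exact iff_of_false (fun h => n13 (G.adj_symm h)) (by decide)
        | exact iff_of_false (fun h => n14 (G.adj_symm h)) (by decide)
        | exact iff_of_false (fun h => n23 (G.adj_symm h)) (by decide)
        | exact iff_of_false (fun h => n24 (G.adj_symm h)) (by decide)

/-- Let `G` be fork-free and let `X₀ = {v 0, ..., v (n-1)}` induce an odd antihole of
order `n ≥ 7` (`v i ~ v j` iff `i ≠ j` and `i, j` are not consecutive modulo `n`).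
Let `A` be the set of vertices outside `X₀` with no neighbor in `X₀`. Then every vertex
`b` with a neighbor in `A` and a neighbor in `X₀` is complete to `X₀`. -/
theorem forkFree_antihole_neighbor_complete {V : Type*} [Fintype V]
    (G : SimpleGraph V) (hfork : HFree G fork)
    {n : ℕ} [NeZero n] (hodd : Odd n) (hn : 7 ≤ n)
    (v : Fin n → V) (hinj : Function.Injective v)
    (hanti : ∀ i j : Fin n, G.Adj (v i) (v j) ↔ (i ≠ j ∧ j ≠ i + 1 ∧ i ≠ j + 1))
    (b : V)
    (hbA : ∃ a : V, (a ∉ Set.range v ∧ ∀ i, ¬ G.Adj a (v i)) ∧ G.Adj b a)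
    (hbX : ∃ i, G.Adj b (v i)) :
    ∀ i, G.Adj b (v i) := by
  obtain ⟨a, ⟨haR, haN⟩, hba⟩ := hbA
  have hane : ∀ q, a ≠ v q := fun q h => haR ⟨q, h.symm⟩
  have hbne : ∀ q, b ≠ v q := fun q h => (haN q) (G.adj_symm (h ▸ hba))
  have hab : a ≠ b := fun h => G.loopless.irrefl b (h ▸ hba)
  -- arithmetic helpers in `Fin n`
  have key : ∀ (x : Fin n) (s t : ℕ), s < n → t < n → s ≠ t →
      x + (s : Fin n) ≠ x + (t : Fin n) := by
    intro x s t hs ht hst h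
    have h2 : (s : Fin n) = t := add_left_cancel h
    have h3 := congrArg Fin.val h2
    rw [Fin.val_cast_of_lt hs, Fin.val_cast_of_lt ht] at h3
    exact hst h3
  have key0 : ∀ (x : Fin n) (t : ℕ), 0 < t → t < n → x ≠ x + (t : Fin n) := by
    intro x t h1 h2
    simpa using key x 0 t (by omega) h2 (by omega)
  -- adjacency helpers
  have hadjV : ∀ (i j : Fin n), i ≠ j → j ≠ i + 1 → i ≠ j + 1 → G.Adj (v i) (v j) :=
    fun i j h1 h2 h3 => (hanti i j).2 ⟨h1, h2, h3⟩
  have hnadjV : ∀ i : Fin n, ¬ G.Adj (v i) (v (i + 1)) :=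
    fun i h => ((hanti _ _).1 h).2.1 rfl
  -- first fork configuration
  have hL1 : ∀ i p : Fin n, G.Adj b (v i) → ¬ G.Adj b (v p) → ¬ G.Adj b (v (p+1)) →
      i ≠ p → i ≠ p + 1 → i ≠ p + 2 → p ≠ i + 1 → False := by
    intro i p hbi hp hp1 h1 h2 h3 h4
    have e1 : p + 2 = p + 1 + 1 := by ring
    apply mk_fork hfork (w0 := v i) (w1 := v p) (w2 := v (p+1)) (w3 := b) (w4 := a)
    · exact fun h => h1 (hinj h)
    · exact fun h => h2 (hinj h)
    · exact fun h => hbne i h.symm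
    · exact fun h => hane i h.symm
    · exact fun h => key0 p 1 (by omega) (by omega) (by simpa using hinj h)
    · exact fun h => hbne p h.symm
    · exact fun h => hane p h.symm
    · exact fun h => hbne (p+1) h.symm
    · exact fun h => hane (p+1) h.symm
    · exact Ne.symm hab
    · exact hadjV i p h1 h4 h2
    · exact hadjV i (p+1) h2 (fun h => h1 (add_right_cancel h).symm) (e1 ▸ h3)
    · exact G.adj_symm hbi
    · exact hba
    · exact fun h => haN i h.symm
    · exact hnadjV p
    · exact fun h => hp h.symm
    · exact fun h => haN p h.symm
    · exact fun h => hp1 h.symm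
    · exact fun h => haN (p+1) h.symm
  -- second fork configuration: consecutive adjacency propagates
  have hL2 : ∀ p : Fin n, G.Adj b (v p) → G.Adj b (v (p+1)) → G.Adj b (v (p+1+1)) := by
    intro p h0 h1
    by_contra hc
    have e2 : p + 1 + 1 = p + (2:ℕ) := by push_cast; ring
    have e3 : p + 1 + 1 + 1 = p + (3:ℕ) := by push_cast; ring
    apply mk_fork hfork (w0 := b) (w1 := a) (w2 := v (p+1)) (w3 := v p) (w4 := v (p+1+1))
    · exact Ne.symm hab
    · exact hbne _
    · exact hbne _
    · exact hbne _
    · exact hane _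
    · exact hane _
    · exact hane _
    · exact fun h => key0 p 1 (by omega) (by omega) (by simpa using (hinj h).symm)
    · exact fun h => key0 (p+1) 1 (by omega) (by omega) (by simpa using hinj h)
    · exact fun h => key0 p 2 (by omega) (by omega) (by rw [e2] at h; simpa using hinj h)
    · exact hba
    · exact h1
    · exact h0
    · refine hadjV p (p+1+1) ?_ ?_ ?_
      · rw [e2]; exact key0 p 2 (by omega) (by omega)
      · exact fun h => key0 (p+1) 1 (by omega) (by omega) h.symm
      · rw [e3]; exact key0 p 3 (by omega) (by omega)
    · exact hc
    · exact haN _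
    · exact haN _
    · exact haN _
    · exact fun h => hnadjV p h.symm
    · exact hnadjV (p+1)
  -- if two consecutive antihole vertices are adjacent to b, then all are
  have hgrow : (∃ p, G.Adj b (v p) ∧ G.Adj b (v (p+1))) → ∀ j, G.Adj b (v j) := by
    rintro ⟨p, h0, h1⟩ j
    have step : ∀ k : ℕ, G.Adj b (v (p + (k:Fin n))) ∧ G.Adj b (v (p + (k:Fin n) + 1)) := by
      intro k
      induction k with
      | zero => exact ⟨by simpa using h0, by simpa using h1⟩
      | succ k ih =>
          have h2 := hL2 (p + (k:Fin n)) ih.1 ih.2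
          have e1 : p + ((k+1 : ℕ) : Fin n) = p + (k:Fin n) + 1 := by push_cast; ring
          have e2 : p + ((k+1 : ℕ) : Fin n) + 1 = p + (k:Fin n) + 1 + 1 := by push_cast; ring
          exact ⟨by rw [e1]; exact ih.2, by rw [e2]; exact h2⟩
    have h3 := (step ((j - p).val)).1
    rw [Fin.cast_val_eq_self] at h3
    have e : p + (j - p) = j := by ring
    rwa [e] at h3
  intro j₀
  by_cases hcons : ∃ p, G.Adj b (v p) ∧ G.Adj b (v (p+1))
  · exact hgrow hcons j₀
  by_contra hj₀
  push_neg at hcons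
  obtain ⟨i0, hi0⟩ := hbX
  -- membership rule from hL1
  have hM : ∀ i q : Fin n, G.Adj b (v i) → ¬ G.Adj b (v q) → ¬ G.Adj b (v (q+1)) →
      i = q + 2 ∨ q = i + 1 := by
    intro i q hbi hq hq1
    by_contra hcon
    push_neg at hcon
    exact hL1 i q hbi hq hq1 (fun h => hq (h ▸ hbi)) (fun h => hq1 (h ▸ hbi))
      hcon.1 hcon.2
  by_cases hScons : ∃ p, ¬ G.Adj b (v p) ∧ ¬ G.Adj b (v (p+1))
  · -- two consecutive non-neighbors: contradiction
    obtain ⟨p, hp, hp1⟩ := hScons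
    have ecast : ∀ s : ℕ, s < n → p + (s:Fin n) + 1 = p + ((s+1 : ℕ) : Fin n) := by
      intro s _; push_cast; ring
    have e2 : p + 2 = p + (2:ℕ) := by push_cast; ring
    -- non-neighbors at p+3, p+4, p+5
    have nA : ∀ s : ℕ, 3 ≤ s → s + 1 < n → ¬ G.Adj b (v (p + (s:Fin n))) := by
      intro s hs3 hsn h
      rcases hM (p + (s:Fin n)) p h hp hp1 with h' | h'
      · rw [e2] at h'
        exact key p s 2 (by omega) (by omega) (by omega) h'
      · rw [ecast s (by omega)] at h'
        exact key0 p (s+1) (by omega) (by omega) h'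
    have nA3 : ¬ G.Adj b (v (p + (3:ℕ))) := nA 3 (by omega) (by omega)
    have nA4 : ¬ G.Adj b (v (p + (4:ℕ))) := nA 4 (by omega) (by omega)
    have nA5 : ¬ G.Adj b (v (p + (5:ℕ))) := nA 5 (by omega) (by omega)
    have nA4' : ¬ G.Adj b (v (p + (3:ℕ) + 1)) := by rw [ecast 3 (by omega)]; exact nA4
    have nA5' : ¬ G.Adj b (v (p + (4:ℕ) + 1)) := by rw [ecast 4 (by omega)]; exact nA5
    rcases hM i0 p hi0 hp hp1 with hc | hc
    · -- i0 = p + 2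
      rcases hM i0 (p + (4:ℕ)) hi0 nA4 nA5' with h' | h'
      · rw [hc] at h'
        rw [e2] at h'
        have e6 : p + (4:ℕ) + 2 = p + (6:ℕ) := by push_cast; ring
        rw [e6] at h'
        exact key p 2 6 (by omega) (by omega) (by omega) h'
      · rw [hc, e2] at h'
        have e3 : p + (2:ℕ) + 1 = p + (3:ℕ) := by push_cast; ring
        rw [e3] at h'
        exact key p 4 3 (by omega) (by omega) (by omega) h'
    · -- p = i0 + 1
      rcases hM i0 (p + (3:ℕ)) hi0 nA3 nA4' with h' | h'
      · have e5 : p + (3:ℕ) + 2 = p + (5:ℕ) := by push_cast; ring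
        rw [e5] at h'
        have : p = p + (5:ℕ) + 1 := by rw [← h']; exact hc
        rw [ecast 5 (by omega)] at this
        exact key0 p 6 (by omega) (by omega) this
      · rw [← hc] at h'
        exact key0 p 3 (by omega) (by omega) h'.symm
  · -- alternating case: contradiction with oddness of n
    push_neg at hScons
    have hstep2 : ∀ j, G.Adj b (v j) → G.Adj b (v (j+1+1)) :=
      fun j h => hScons (j+1) (hcons j h)
    have hall : ∀ k : ℕ, G.Adj b (v (i0 + ((2*k : ℕ) : Fin n))) := by
      intro k
      induction k with
      | zero => simpa using hi0
      | succ k ih =>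
          have h2 := hstep2 _ ih
          have e : i0 + ((2*(k+1) : ℕ) : Fin n) = i0 + ((2*k : ℕ) : Fin n) + 1 + 1 := by
            push_cast; ring
          rw [e]; exact h2
    obtain ⟨m, hm⟩ := hodd
    have h2k : ((2 * ((j₀ - i0).val * (m + 1)) : ℕ) : Fin n) = j₀ - i0 := by
      have e1' : ∀ c : ℕ, (2 * (c * (m + 1)) : ℕ) = c * (n + 1) := by
        intro c; rw [hm]; ring
      have e1 := e1' (j₀ - i0).val
      rw [e1]
      push_cast
      rw [Fin.natCast_self]
      ring
    have h3 := hall ((j₀ - i0).val * (m + 1))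
    rw [h2k] at h3
    have e : i0 + (j₀ - i0) = j₀ := by ring
    rw [e] at h3
    exact hj₀ h3
end

section
/- Let G be a fork-free graph and let C = v_1v_2...v_nv_1 be an induced cycle of G with n odd and n ≥ 5. Then the set A of all vertices of G that are adjacent to both v_1 and v_2 and adjacent to neither v_3 nor v_4 is a clique of G. -/
open SimpleGraph

instance inst_s15 : DecidableRel fork.Adj :=
  fun a b => decidable_of_iff _ (SimpleGraph.fromRel_adj _ a b).symm

open Fin.NatCast Fin.CommRing in
/-- Let `G` be fork-free and `C = c 0, c 1, ..., c (n-1), c 0` an induced odd cycle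
(`n` odd, `n ≥ 5`). Then the set of vertices adjacent to both `c 0` and `c 1` and to
neither `c 2` nor `c 3` is a clique. -/
theorem forkFree_common_neighbors_clique {V : Type*} [Fintype V]
    (G : SimpleGraph V) (hfork : HFree G fork)
    {n : ℕ} [NeZero n] (hodd : Odd n) (hn : 5 ≤ n)
    (c : Fin n → V) (hinj : Function.Injective c)
    (hcyc : ∀ i j : Fin n, G.Adj (c i) (c j) ↔ (j = i + 1 ∨ i = j + 1)) :
    G.IsClique {x : V | G.Adj x (c 0) ∧ G.Adj x (c 1) ∧ ¬ G.Adj x (c 2) ∧ ¬ G.Adj x (c 3)} := by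
  have madd : ∀ a : ℕ, ((a : Fin n)) + 1 = ((a + 1 : ℕ) : Fin n) := by
    intro a; push_cast; ring
  have meq : ∀ a b : ℕ, a < n → b < n → (((a : Fin n) = (b : Fin n)) ↔ a = b) := by
    intro a b ha hb
    constructor
    · intro h
      have := congrArg Fin.val h
      rwa [Fin.val_natCast, Fin.val_natCast, Nat.mod_eq_of_lt ha, Nat.mod_eq_of_lt hb] at this
    · intro h; rw [h]
  -- adjacency facts on the cycle
  have a12 : G.Adj (c 1) (c 2) := (hcyc 1 2).mpr (Or.inl (madd 1).symm)
  have a23 : G.Adj (c 2) (c 3) := (hcyc 2 3).mpr (Or.inl (madd 2).symm)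
  have na13 : ¬ G.Adj (c 1) (c 3) := by
    rw [hcyc]
    push_neg
    refine ⟨?_, ?_⟩
    · show ((3:ℕ) : Fin n) ≠ ((1:ℕ) : Fin n) + 1
      rw [madd 1]; exact fun h => by have := (meq 3 2 (by omega) (by omega)).mp h; omega
    · show ((1:ℕ) : Fin n) ≠ ((3:ℕ) : Fin n) + 1
      rw [madd 3]; exact fun h => by have := (meq 1 4 (by omega) (by omega)).mp h; omega
  have na20 : ¬ G.Adj (c 2) (c 0) := by
    rw [hcyc]
    push_neg
    refine ⟨?_, ?_⟩
    · show ((0:ℕ) : Fin n) ≠ ((2:ℕ) : Fin n) + 1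
      rw [madd 2]; exact fun h => by have := (meq 0 3 (by omega) (by omega)).mp h; omega
    · show ((2:ℕ) : Fin n) ≠ ((0:ℕ) : Fin n) + 1
      rw [madd 0]; exact fun h => by have := (meq 2 1 (by omega) (by omega)).mp h; omega
  have na31 : ¬ G.Adj (c 3) (c 1) := fun h => na13 h.symm
  intro x hx y hy hxy
  obtain ⟨hx0, hx1, hx2, hx3⟩ := hx
  obtain ⟨hy0, hy1, hy2, hy3⟩ := hy
  by_contra hadj
  -- symmetrized adjacency facts
  have hx1' : G.Adj (c 1) x := hx1.symm
  have hy1' : G.Adj (c 1) y := hy1.symm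
  have hx2' : ¬ G.Adj (c 2) x := fun h => hx2 h.symm
  have hy2' : ¬ G.Adj (c 2) y := fun h => hy2 h.symm
  have hx3' : ¬ G.Adj (c 3) x := fun h => hx3 h.symm
  have hy3' : ¬ G.Adj (c 3) y := fun h => hy3 h.symm
  have nxy : ¬ G.Adj x y := hadj
  have nyx : ¬ G.Adj y x := fun h => hadj h.symm
  have a21 : G.Adj (c 2) (c 1) := a12.symm
  have a32 : G.Adj (c 3) (c 2) := a23.symm
  -- distinctness
  have xc1 : x ≠ c 1 := G.ne_of_adj hx1
  have yc1 : y ≠ c 1 := G.ne_of_adj hy1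
  have xc2 : x ≠ c 2 := fun h => na20 (h ▸ hx0)
  have yc2 : y ≠ c 2 := fun h => na20 (h ▸ hy0)
  have xc3 : x ≠ c 3 := fun h => na31 (h ▸ hx1)
  have yc3 : y ≠ c 3 := fun h => na31 (h ▸ hy1)
  have c12 : c 1 ≠ c 2 := fun h => by
    have := (meq 1 2 (by omega) (by omega)).mp (hinj h); omega
  have c13 : c 1 ≠ c 3 := fun h => by
    have := (meq 1 3 (by omega) (by omega)).mp (hinj h); omega
  have c23 : c 2 ≠ c 3 := fun h => by
    have := (meq 2 3 (by omega) (by omega)).mp (hinj h); omega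
  have xc1' : c 1 ≠ x := xc1.symm
  have yc1' : c 1 ≠ y := yc1.symm
  have xc2' : c 2 ≠ x := xc2.symm
  have yc2' : c 2 ≠ y := yc2.symm
  have xc3' : c 3 ≠ x := xc3.symm
  have yc3' : c 3 ≠ y := yc3.symm
  have c12' : c 2 ≠ c 1 := c12.symm
  have c13' : c 3 ≠ c 1 := c13.symm
  have c23' : c 3 ≠ c 2 := c23.symm
  have emb : fork ↪g G := by
    refine ⟨⟨![c 1, x, y, c 2, c 3], ?_⟩, ?_⟩
    · intro a b hab
      fin_cases a <;> fin_cases b <;>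
        first
          | rfl
          | exact absurd hab hxy | exact absurd hab hxy.symm
          | exact absurd hab xc1 | exact absurd hab yc1
          | exact absurd hab xc2 | exact absurd hab yc2
          | exact absurd hab xc3 | exact absurd hab yc3
          | exact absurd hab c12 | exact absurd hab c13 | exact absurd hab c23
          | exact absurd hab xc1' | exact absurd hab yc1'
          | exact absurd hab xc2' | exact absurd hab yc2'
          | exact absurd hab xc3' | exact absurd hab yc3'
          | exact absurd hab c12' | exact absurd hab c13' | exact absurd hab c23'
    · intro a b
      fin_cases a <;> fin_cases b <;>
        · constructor
          · intro h
            first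
              | decide
              | exact absurd h G.irrefl
              | exact absurd h (by assumption)
          · intro h
            first
              | exact absurd h (by decide)
              | assumption
  exact hfork.false emb
end

section
/- Let G be a fork-free graph, let C = v_1v_2...v_nv_1 be an induced cycle of G with n odd and n ≥ 5, and let u be a vertex not on C whose neighbors on C are exactly v_1 and v_2. Then the set D of neighbors of u that have no neighbor on C and do not lie on C is a clique of G. -/
open SimpleGraph

/-- Let `G` be fork-free, `C = c 0, ..., c (n-1), c 0` an induced odd cycle (`n` odd,
`n ≥ 5`), and `u` a vertex off `C` whose neighbors on `C` are exactly `c 0` and `c 1`.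
Then the set `D` of neighbors of `u` that are off `C` and have no neighbor on `C`
is a clique. -/
theorem forkFree_balloon_center_private_neighbors_clique {V : Type*} [Fintype V]
    (G : SimpleGraph V) (hfork : HFree G fork)
    {n : ℕ} [NeZero n] (hodd : Odd n) (hn : 5 ≤ n)
    (c : Fin n → V) (hinj : Function.Injective c)
    (hcyc : ∀ i j : Fin n, G.Adj (c i) (c j) ↔ (j = i + 1 ∨ i = j + 1))
    (u : V) (hu : u ∉ Set.range c)
    (huadj : ∀ i : Fin n, G.Adj u (c i) ↔ (i = 0 ∨ i = 1)) :
    G.IsClique {x : V | G.Adj u x ∧ x ∉ Set.range c ∧ ∀ i, ¬ G.Adj x (c i)} := by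
  intro x hx y hy hxy
  by_contra hadj
  obtain ⟨hux, hxr, hxc⟩ := hx
  obtain ⟨huy, hyr, hyc⟩ := hy
  -- index facts
  have h10 : (1 : Fin n) ≠ 0 := by
    intro h
    have := congrArg Fin.val h
    rw [Fin.val_one'] at this
    rw [Nat.mod_eq_of_lt (by omega)] at this
    simp at this
  have hv1 : (1 : ℕ) % n = 1 := Nat.mod_eq_of_lt (by omega)
  have hv2 : ((1 : Fin n) + 1).val = 2 := by
    rw [Fin.val_add, Fin.val_one', hv1, Nat.mod_eq_of_lt (by omega)]
  have h20 : (1 : Fin n) + 1 ≠ 0 := by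
    intro h
    have := congrArg Fin.val h
    rw [hv2] at this
    simp at this
  have hm0 : (-1 : Fin n) ≠ 0 := by
    intro h
    apply h10
    have := congrArg (· + 1) h
    simpa using this.symm
  have hm1 : (-1 : Fin n) ≠ 1 := by
    intro h
    apply h20
    have := congrArg (· + 1) h
    simp at this
    exact this.symm
  -- adjacency facts
  have h1 : G.Adj u (c 0) := (huadj 0).2 (Or.inl rfl)
  have h2 : G.Adj (c 0) (c (-1)) := (hcyc 0 (-1)).2 (Or.inr (neg_add_cancel (1 : Fin n)).symm)
  have h3 : ¬ G.Adj u (c (-1)) := by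
    rw [huadj]; push_neg; exact ⟨hm0, hm1⟩
  -- distinctness facts
  have hucm : u ≠ c (-1) := fun h => hu ⟨-1, h.symm⟩
  have huc0 : u ≠ c 0 := fun h => hu ⟨0, h.symm⟩
  have hxc0 : x ≠ c 0 := fun h => hxr ⟨0, h.symm⟩
  have hxcm : x ≠ c (-1) := fun h => hxr ⟨-1, h.symm⟩
  have hyc0 : y ≠ c 0 := fun h => hyr ⟨0, h.symm⟩
  have hycm : y ≠ c (-1) := fun h => hyr ⟨-1, h.symm⟩
  have hc0m : c 0 ≠ c (-1) := fun h => hm0 (hinj h.symm)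
  have emb : fork ↪g G := by
    refine ⟨⟨![u, x, y, c 0, c (-1)], ?_⟩, ?_⟩
    · intro a b hab
      fin_cases a <;> fin_cases b <;>
        simp_all [hux.ne, huy.ne, hux.ne', huy.ne', hxy] <;>
        first
        | rfl
        | (exfalso; first
            | exact hxy hab | exact hxy hab.symm
            | exact hxc0 hab | exact hxcm hab
            | exact hyc0 hab | exact hycm hab
            | exact hc0m hab | exact hc0m hab.symm
            | exact hxc0 hab.symm | exact hxcm hab.symm
            | exact hyc0 hab.symm | exact hycm hab.symm)
    · intro a b
      show G.Adj (![u, x, y, c 0, c (-1)] a) (![u, x, y, c 0, c (-1)] b) ↔ fork.Adj a b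
      fin_cases a <;> fin_cases b <;>
        simp [fork, hux, huy, h1, h2, h3, hadj, hxc, hyc,
          hux.symm, huy.symm, h1.symm, h2.symm,
          G.irrefl] <;>
        first
        | (intro h; exact hadj h.symm)
        | (intro h; exact hxc _ h.symm)
        | (intro h; exact hyc _ h.symm)
        | (intro h; exact h3 h.symm)
        | skip
  exact hfork.false emb
end

section
/- Let G be a (fork, butterfly)-free graph, let C = v_1v_2...v_nv_1 be an induced cycle of G with n odd and n ≥ 5, and let u be a vertex not on C whose neighbors on C are exactly v_1 and v_2. Then at most one neighbor of u has no neighbor on C. -/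
open SimpleGraph

/-- The butterfly `K_1 + 2K_2`: two triangles `{0,1,2}` and `{0,3,4}`
sharing exactly the vertex `0`. -/
def butterfly : SimpleGraph (Fin 5) :=
  SimpleGraph.fromRel (fun x y =>
    x = 0 ∨ (x = 1 ∧ y = 2) ∨ (x = 3 ∧ y = 4))

set_option maxHeartbeats 2000000 in
private theorem aux_fbf {V : Type*} [Fintype V]
    (G : SimpleGraph V) (hfork : HFree G fork) (hbutterfly : HFree G butterfly)
    {n : ℕ} [NeZero n] (hodd : Odd n) (hn : 5 ≤ n)
    (c : Fin n → V) (hinj : Function.Injective c)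
    (hcyc : ∀ i j : Fin n, G.Adj (c i) (c j) ↔ (j = i + 1 ∨ i = j + 1))
    (u : V) (hu : u ∉ Set.range c)
    (huadj : ∀ i : Fin n, G.Adj u (c i) ↔ (i = 0 ∨ i = 1)) :
    {x : V | G.Adj u x ∧ ∀ i, ¬ G.Adj x (c i)}.Subsingleton := by
  intro x hx y hy
  by_contra hne
  obtain ⟨hux, hxC⟩ := hx
  obtain ⟨huy, hyC⟩ := hy
  -- basic Fin n facts
  have hv1 : ((1 : Fin n)).val = 1 := by
    rw [Fin.val_one']; exact Nat.mod_eq_of_lt (by omega)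
  have h01 : (0 : Fin n) ≠ 1 := by
    intro h; have := congrArg Fin.val h; rw [Fin.val_zero, hv1] at this; omega
  have hm1 : ((-1 : Fin n)).val = n - 1 := by
    rw [Fin.coe_neg, hv1]; exact Nat.mod_eq_of_lt (by omega)
  have hm0 : (-1 : Fin n) ≠ 0 := by
    intro h; have := congrArg Fin.val h; rw [hm1, Fin.val_zero] at this; omega
  have hm1' : (-1 : Fin n) ≠ 1 := by
    intro h; have := congrArg Fin.val h; rw [hm1, hv1] at this; omega
  -- vertices off C
  have hune : ∀ i, u ≠ c i := fun i h => hu ⟨i, h.symm⟩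
  have hxne : ∀ i, x ≠ c i := by
    intro i h
    exact hxC (i+1) (h ▸ ((hcyc i (i+1)).mpr (Or.inl rfl)))
  have hyne : ∀ i, y ≠ c i := by
    intro i h
    exact hyC (i+1) (h ▸ ((hcyc i (i+1)).mpr (Or.inl rfl)))
  have huc0 : G.Adj u (c 0) := (huadj 0).mpr (Or.inl rfl)
  have huc1 : G.Adj u (c 1) := (huadj 1).mpr (Or.inr rfl)
  have hc01 : G.Adj (c 0) (c 1) := (hcyc 0 1).mpr (Or.inl (by simp))
  have hc0m : G.Adj (c 0) (c (-1)) := (hcyc 0 (-1)).mpr (Or.inr (by simp))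
  have hucm : ¬ G.Adj u (c (-1)) := by
    rw [huadj]; push_neg; exact ⟨hm0, hm1'⟩
  have hxu : x ≠ u := hux.ne'
  have hyu : y ≠ u := huy.ne'
  have hccne : ∀ i j : Fin n, i ≠ j → c i ≠ c j := fun i j h hc => h (hinj hc)
  by_cases hxy : G.Adj x y
  · -- butterfly on u, x, y, c 0, c 1
    refine hbutterfly.false ⟨⟨![u, x, y, c 0, c 1], ?_⟩, ?_⟩
    · intro a b hab
      fin_cases a <;> fin_cases b <;> simp only [Matrix.cons_val_zero,
        Matrix.cons_val_one, Matrix.head_cons, Matrix.cons_val_two,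
        Matrix.tail_cons, Matrix.cons_val_three, Matrix.cons_val_four] at hab ⊢ <;>
        first
          | rfl
          | (exfalso; first
              | exact hxu hab | exact hyu hab | exact hne hab | exact hne hab.symm
              | exact hune _ hab | exact hune _ hab.symm
              | exact hxne _ hab | exact hxne _ hab.symm
              | exact hyne _ hab | exact hyne _ hab.symm
              | exact hxu hab.symm | exact hyu hab.symm
              | exact h01 (hinj hab) | exact h01 (hinj hab).symm)
    · intro a b
      fin_cases a <;> fin_cases b <;>
        first
          | exact iff_of_true hux (by simp [butterfly, fork, SimpleGraph.fromRel_adj]) | exact iff_of_true hux.symm (by simp [butterfly, fork, SimpleGraph.fromRel_adj])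
          | exact iff_of_true huy (by simp [butterfly, fork, SimpleGraph.fromRel_adj]) | exact iff_of_true huy.symm (by simp [butterfly, fork, SimpleGraph.fromRel_adj])
          | exact iff_of_true huc0 (by simp [butterfly, fork, SimpleGraph.fromRel_adj]) | exact iff_of_true huc0.symm (by simp [butterfly, fork, SimpleGraph.fromRel_adj])
          | exact iff_of_true huc1 (by simp [butterfly, fork, SimpleGraph.fromRel_adj]) | exact iff_of_true huc1.symm (by simp [butterfly, fork, SimpleGraph.fromRel_adj])
          | exact iff_of_true hxy (by simp [butterfly, fork, SimpleGraph.fromRel_adj]) | exact iff_of_true hxy.symm (by simp [butterfly, fork, SimpleGraph.fromRel_adj])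
          | exact iff_of_true hc01 (by simp [butterfly, fork, SimpleGraph.fromRel_adj]) | exact iff_of_true hc01.symm (by simp [butterfly, fork, SimpleGraph.fromRel_adj])
          | exact iff_of_false (hxC _) (by simp [butterfly, fork, SimpleGraph.fromRel_adj])
          | exact iff_of_false (fun h => hxC _ h.symm) (by simp [butterfly, fork, SimpleGraph.fromRel_adj])
          | exact iff_of_false (hyC _) (by simp [butterfly, fork, SimpleGraph.fromRel_adj])
          | exact iff_of_false (fun h => hyC _ h.symm) (by simp [butterfly, fork, SimpleGraph.fromRel_adj])
          | exact iff_of_false (G.irrefl) (by simp [butterfly, fork, SimpleGraph.fromRel_adj])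
  · -- fork centered u with leaves x, y, c0 and pendant c(-1)
    refine hfork.false ⟨⟨![u, x, y, c 0, c (-1)], ?_⟩, ?_⟩
    · intro a b hab
      fin_cases a <;> fin_cases b <;> simp only [Matrix.cons_val_zero,
        Matrix.cons_val_one, Matrix.head_cons, Matrix.cons_val_two,
        Matrix.tail_cons, Matrix.cons_val_three, Matrix.cons_val_four] at hab ⊢ <;>
        first
          | rfl
          | (exfalso; first
              | exact hxu hab | exact hyu hab | exact hne hab | exact hne hab.symm
              | exact hune _ hab | exact hune _ hab.symm
              | exact hxne _ hab | exact hxne _ hab.symm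
              | exact hyne _ hab | exact hyne _ hab.symm
              | exact hxu hab.symm | exact hyu hab.symm
              | exact hm0 (hinj hab) | exact hm0 (hinj hab).symm)
    · intro a b
      fin_cases a <;> fin_cases b <;>
        first
          | exact iff_of_true hux (by simp [butterfly, fork, SimpleGraph.fromRel_adj]) | exact iff_of_true hux.symm (by simp [butterfly, fork, SimpleGraph.fromRel_adj])
          | exact iff_of_true huy (by simp [butterfly, fork, SimpleGraph.fromRel_adj]) | exact iff_of_true huy.symm (by simp [butterfly, fork, SimpleGraph.fromRel_adj])
          | exact iff_of_true huc0 (by simp [butterfly, fork, SimpleGraph.fromRel_adj]) | exact iff_of_true huc0.symm (by simp [butterfly, fork, SimpleGraph.fromRel_adj])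
          | exact iff_of_true hc0m (by simp [butterfly, fork, SimpleGraph.fromRel_adj]) | exact iff_of_true hc0m.symm (by simp [butterfly, fork, SimpleGraph.fromRel_adj])
          | exact iff_of_false hxy (by simp [butterfly, fork, SimpleGraph.fromRel_adj])
          | exact iff_of_false (fun h => hxy h.symm) (by simp [butterfly, fork, SimpleGraph.fromRel_adj])
          | exact iff_of_false hucm (by simp [butterfly, fork, SimpleGraph.fromRel_adj])
          | exact iff_of_false (fun h => hucm h.symm) (by simp [butterfly, fork, SimpleGraph.fromRel_adj])
          | exact iff_of_false (hxC _) (by simp [butterfly, fork, SimpleGraph.fromRel_adj])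
          | exact iff_of_false (fun h => hxC _ h.symm) (by simp [butterfly, fork, SimpleGraph.fromRel_adj])
          | exact iff_of_false (hyC _) (by simp [butterfly, fork, SimpleGraph.fromRel_adj])
          | exact iff_of_false (fun h => hyC _ h.symm) (by simp [butterfly, fork, SimpleGraph.fromRel_adj])
          | exact iff_of_false (G.irrefl) (by simp [butterfly, fork, SimpleGraph.fromRel_adj])

/-- Let `G` be (fork, butterfly)-free, `C = c 0, ..., c (n-1), c 0` an induced odd cycle
(`n` odd, `n ≥ 5`), and `u` a vertex off `C` whose neighbors on `C` are exactly `c 0`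
and `c 1`. Then at most one neighbor of `u` has no neighbor on `C`. -/
theorem fork_butterfly_free_at_most_one_private_neighbor {V : Type*} [Fintype V]
    (G : SimpleGraph V) (hfork : HFree G fork) (hbutterfly : HFree G butterfly)
    {n : ℕ} [NeZero n] (hodd : Odd n) (hn : 5 ≤ n)
    (c : Fin n → V) (hinj : Function.Injective c)
    (hcyc : ∀ i j : Fin n, G.Adj (c i) (c j) ↔ (j = i + 1 ∨ i = j + 1))
    (u : V) (hu : u ∉ Set.range c)
    (huadj : ∀ i : Fin n, G.Adj u (c i) ↔ (i = 0 ∨ i = 1)) :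
    {x : V | G.Adj u x ∧ ∀ i, ¬ G.Adj x (c i)}.Subsingleton :=
  aux_fbf G hfork hbutterfly hodd hn c hinj hcyc u hu huadj
end
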